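/- arXiv:1910.00511 — 2 statements merged into one kernel-verified Lean document; each statement's English description precedes it below -/
import Mathlib

section
/- Let c: ℝⁿ → ℝ have L-Lipschitz continuous gradient on a convex set B, and let x ∈ B with ∇c(x) ≠ 0. For the ℓ2 restoration move z = x − α c(x) ∇c(x)/‖∇c(x)‖₂², if z ∈ B then |c(z) − (1 − α) c(x)| ≤ (L/2) α² c(x)² / ‖∇c(x)‖₂². -/
/-!
Along the segment `t ↦ x + t • (z - x)` the first-order Taylor remainder of `c` has derivative
`⟪g (x + t • (z - x)) - g x, z - x⟫`, which the Lipschitz bound on `g` makes at most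
`L t ‖z - x‖²` in absolute value; integrating gives the descent lemma
`|c z - c x - ⟪g x, z - x⟫| ≤ L/2 ‖z - x‖²`. For the restoration move the linear term is exactly
`-α c(x)` and `‖z - x‖² = α² c(x)² / ‖g x‖²`.
-/

open RealInnerProductSpace Set

theorem abs_le_half_mul_sq_of_abs_deriv_le {f f' : ℝ → ℝ} {K b : ℝ} (hb : 0 ≤ b) (hf0 : f 0 = 0)
    (hf : ∀ t ∈ Icc 0 b, HasDerivAt f (f' t) t) (hf' : ∀ t ∈ Ico 0 b, |f' t| ≤ K * t) :
    |f b| ≤ K / 2 * b ^ 2 := by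
  have hbound : ∀ t, HasDerivAt (fun t => K / 2 * t ^ 2) (K * t) t := fun t => by
    simpa using ((hasDerivAt_pow 2 t).const_mul (K / 2)).congr_deriv (by ring)
  exact image_norm_le_of_norm_deriv_right_le_deriv_boundary
    (fun t ht => (hf t ht).continuousAt.continuousWithinAt)
    (fun t ht => (hf t (Ico_subset_Icc_self ht)).hasDerivWithinAt)
    (by simp [hf0]) hbound hf' (right_mem_Icc.2 hb)

theorem HasGradientAt.hasDerivAt_comp_add_smul {E : Type*} [NormedAddCommGroup E]
    [InnerProductSpace ℝ E] [CompleteSpace E] {c : E → ℝ} {g' x v : E} {t : ℝ}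
    (h : HasGradientAt c g' (x + t • v)) :
    HasDerivAt (fun s : ℝ => c (x + s • v)) ⟪g', v⟫ t := by
  have hline : HasDerivAt (fun s : ℝ => x + s • v) v t := by
    simpa using ((hasDerivAt_id t).smul_const v).const_add x
  simpa [Function.comp_def] using h.hasFDerivAt.comp_hasDerivAt t hline

theorem abs_sub_sub_inner_le_of_lipschitz_gradient {E : Type*} [NormedAddCommGroup E]
    [InnerProductSpace ℝ E] [CompleteSpace E] {B : Set E} (hB : Convex ℝ B) {c : E → ℝ}
    {g : E → E} (hgrad : ∀ x ∈ B, HasGradientAt c (g x) x) {L : ℝ}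
    (hlip : ∀ x ∈ B, ∀ y ∈ B, ‖g y - g x‖ ≤ L * ‖y - x‖) {x z : E} (hx : x ∈ B) (hz : z ∈ B) :
    |c z - c x - ⟪g x, z - x⟫| ≤ L / 2 * ‖z - x‖ ^ 2 := by
  set v := z - x
  have hseg : ∀ t ∈ Icc (0 : ℝ) 1, x + t • v ∈ B := fun t ht => hB.add_smul_sub_mem hx hz ht
  have hderiv : ∀ t ∈ Icc (0 : ℝ) 1, HasDerivAt (fun s => c (x + s • v) - c x - s * ⟪g x, v⟫)
      (⟪g (x + t • v) - g x, v⟫) t := fun t ht => by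
    have := (((hgrad _ (hseg t ht)).hasDerivAt_comp_add_smul).sub_const (c x)).fun_sub
      ((hasDerivAt_id t).mul_const ⟪g x, v⟫)
    simpa [inner_sub_left] using this
  have hbound : ∀ t ∈ Ico (0 : ℝ) 1, |⟪g (x + t • v) - g x, v⟫| ≤ L * ‖v‖ ^ 2 * t := by
    intro t ht
    have hstep : ‖x + t • v - x‖ = t * ‖v‖ := by simp [norm_smul, abs_of_nonneg ht.1]
    calc |⟪g (x + t • v) - g x, v⟫| ≤ ‖g (x + t • v) - g x‖ * ‖v‖ := abs_real_inner_le_norm _ _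
      _ ≤ L * (t * ‖v‖) * ‖v‖ := by
        rw [← hstep]
        exact mul_le_mul_of_nonneg_right (hlip x hx _ (hseg t (Ico_subset_Icc_self ht)))
          (norm_nonneg v)
      _ = L * ‖v‖ ^ 2 * t := by ring
  have hend := abs_le_half_mul_sq_of_abs_deriv_le zero_le_one (by simp) hderiv hbound
  simp only [one_smul, one_mul, add_sub_cancel, v] at hend
  linarith

theorem stmt15_general (n : ℕ) (B : Set (EuclideanSpace ℝ (Fin n))) (hB : Convex ℝ B)
    (c : EuclideanSpace ℝ (Fin n) → ℝ)
    (g : EuclideanSpace ℝ (Fin n) → EuclideanSpace ℝ (Fin n))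
    (hgrad : ∀ x ∈ B, HasGradientAt c (g x) x)
    (L : ℝ)
    (hlip : ∀ x ∈ B, ∀ y ∈ B, ‖g y - g x‖ ≤ L * ‖y - x‖)
    (x : EuclideanSpace ℝ (Fin n)) (hx : x ∈ B) (hgx : g x ≠ 0)
    (α : ℝ)
    (z : EuclideanSpace ℝ (Fin n))
    (hz : z = x - (α * c x / ‖g x‖ ^ 2) • g x)
    (hzB : z ∈ B) :
    |c z - (1 - α) * c x| ≤ L / 2 * α ^ 2 * (c x) ^ 2 / ‖g x‖ ^ 2 := by
  have hg : ‖g x‖ ^ 2 ≠ 0 := pow_ne_zero 2 (norm_ne_zero_iff.2 hgx)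
  have hzx : z - x = -(α * c x / ‖g x‖ ^ 2) • g x := by rw [hz]; module
  have hinner : ⟪g x, z - x⟫ = -(α * c x) := by
    rw [hzx, real_inner_smul_right, real_inner_self_eq_norm_sq]
    field_simp
  have hnorm : ‖z - x‖ ^ 2 = α ^ 2 * (c x) ^ 2 / ‖g x‖ ^ 2 := by
    rw [hzx, norm_smul, mul_pow, Real.norm_eq_abs, sq_abs]
    field_simp
  have key := abs_sub_sub_inner_le_of_lipschitz_gradient hB hgrad hlip hx hzB
  rw [hinner, hnorm] at key
  calc |c z - (1 - α) * c x| = |c z - c x - -(α * c x)| := by ring_nf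
    _ ≤ L / 2 * (α ^ 2 * c x ^ 2 / ‖g x‖ ^ 2) := key
    _ = L / 2 * α ^ 2 * (c x) ^ 2 / ‖g x‖ ^ 2 := by ring

/-- Accuracy of one ℓ2 restoration move under `L`-Lipschitz gradient: for
`z = x − (α c(x)/‖∇c(x)‖²) ∇c(x)`, if `z ∈ B` then
`|c(z) − (1 − α) c(x)| ≤ (L/2) α² c(x)² / ‖∇c(x)‖²`. -/
theorem stmt15 (n : ℕ) (B : Set (EuclideanSpace ℝ (Fin n))) (hB : Convex ℝ B)
    (c : EuclideanSpace ℝ (Fin n) → ℝ)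
    (g : EuclideanSpace ℝ (Fin n) → EuclideanSpace ℝ (Fin n))
    (hgrad : ∀ x ∈ B, HasGradientAt c (g x) x)
    (L : ℝ) (hL : 0 ≤ L)
    (hlip : ∀ x ∈ B, ∀ y ∈ B, ‖g y - g x‖ ≤ L * ‖y - x‖)
    (x : EuclideanSpace ℝ (Fin n)) (hx : x ∈ B) (hgx : g x ≠ 0)
    (α : ℝ) (hα0 : 0 ≤ α) (hα1 : α ≤ 1)
    (z : EuclideanSpace ℝ (Fin n))
    (hz : z = x - (α * c x / ‖g x‖ ^ 2) • g x)
    (hzB : z ∈ B) :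
    |c z - (1 - α) * c x| ≤ L / 2 * α ^ 2 * (c x) ^ 2 / ‖g x‖ ^ 2 :=
  stmt15_general n B hB c g hgrad L hlip x hx hgx α z hz hzB
end

section
/- For a nonzero g ∈ ℝⁿ, c ∈ ℝ, and a box [l, u]ⁿ containing a feasible point, the minimizer of ‖x − x₀‖₂ subject to ⟨g, x − x₀⟩ = −c and x ∈ [l, u]ⁿ, when it exists, has each coordinate x*_i equal to either x₀_i + t g_i, l, or u for a single common scalar t ∈ ℝ. -/
open RealInnerProductSpace

open Filter Topology

lemma stmt17_key {n : ℕ} {g x₀ xs d : EuclideanSpace ℝ (Fin n)} {c l u : ℝ}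
    (hmin : ∀ y : EuclideanSpace ℝ (Fin n), ⟪g, y - x₀⟫ = -c →
      (∀ i, y i ∈ Set.Icc l u) → ‖xs - x₀‖ ≤ ‖y - x₀‖)
    (hxsc : ⟪g, xs - x₀⟫ = -c)
    (hd : ⟪g, d⟫ = 0) (hsupp : ∀ i, d i ≠ 0 → l < xs i ∧ xs i < u)
    (hxsb : ∀ i, xs i ∈ Set.Icc l u) :
    ⟪xs - x₀, d⟫ = 0 := by
  set a : ℝ := ⟪xs - x₀, d⟫ with ha
  have expand : ∀ ε : ℝ, ‖xs + ε • d - x₀‖ ^ 2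
      = ‖xs - x₀‖ ^ 2 + 2 * (a * ε) + ‖d‖ ^ 2 * ε ^ 2 := by
    intro ε
    have h1 : xs + ε • d - x₀ = (xs - x₀) + ε • d := by abel
    rw [h1, norm_add_sq_real, real_inner_smul_right, norm_smul, mul_pow, Real.norm_eq_abs, sq_abs, ← ha]
    ring
  have hconstr : ∀ ε : ℝ, ⟪g, xs + ε • d - x₀⟫ = -c := by
    intro ε
    have h1 : xs + ε • d - x₀ = (xs - x₀) + ε • d := by abel
    rw [h1, inner_add_right, real_inner_smul_right, hd, hxsc]
    ring
  have hev : ∀ᶠ ε in 𝓝 (0:ℝ), ∀ i, (xs + ε • d) i ∈ Set.Icc l u := by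
    rw [eventually_all]
    intro i
    by_cases hdi : d i = 0
    · refine Eventually.of_forall fun ε => ?_
      have : (xs + ε • d) i = xs i + ε * d i := rfl
      rw [this, hdi, mul_zero, add_zero]
      exact hxsb i
    · obtain ⟨h1, h2⟩ := hsupp i hdi
      have ht : Tendsto (fun ε : ℝ => (xs + ε • d) i) (𝓝 0) (𝓝 (xs i)) := by
        have : (fun ε : ℝ => (xs + ε • d) i) = fun ε => xs i + ε * d i := rfl
        rw [this]
        have hc : Continuous fun ε : ℝ => xs i + ε * d i := by continuity
        simpa using hc.tendsto 0
      have hmem : Set.Ioo l u ∈ 𝓝 (xs i) := isOpen_Ioo.mem_nhds ⟨h1, h2⟩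
      filter_upwards [ht.eventually hmem] with ε hε
      exact Set.Ioo_subset_Icc_self hε
  have hloc : IsLocalMin (fun ε : ℝ => 2 * (a * ε) + ‖d‖ ^ 2 * ε ^ 2) 0 := by
    have : ∀ᶠ ε in 𝓝 (0:ℝ), (0:ℝ) ≤ 2 * (a * ε) + ‖d‖ ^ 2 * ε ^ 2 := by
      filter_upwards [hev] with ε hε
      have hle := hmin (xs + ε • d) (hconstr ε) hε
      have : ‖xs - x₀‖ ^ 2 ≤ ‖xs + ε • d - x₀‖ ^ 2 := by
        exact pow_le_pow_left₀ (norm_nonneg _) hle 2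
      rw [expand ε] at this
      linarith
    unfold IsLocalMin IsMinFilter
    filter_upwards [this] with ε hε
    simpa using hε
  have hda : HasDerivAt (fun ε : ℝ => 2 * (a * ε) + ‖d‖ ^ 2 * ε ^ 2) (2 * a) 0 := by
    have h1 : HasDerivAt (fun ε : ℝ => 2 * (a * ε)) (2 * a) 0 := by
      simpa using ((hasDerivAt_id (0:ℝ)).const_mul a).const_mul 2
    have h2 : HasDerivAt (fun ε : ℝ => ‖d‖ ^ 2 * ε ^ 2) 0 0 := by
      simpa using (hasDerivAt_pow 2 (0:ℝ)).const_mul (‖d‖ ^ 2)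
    have h3 := h1.add h2
    rw [add_zero] at h3
    exact h3
  have := hloc.deriv_eq_zero
  rw [hda.deriv] at this
  linarith


/-- Structure of the box-constrained restoration move: the minimizer of `‖x − x₀‖₂`
over the intersection of the hyperplane `{x | ⟪g, x − x₀⟫ = −c}` with the box
`[l, u]ⁿ` has each coordinate equal to either `x₀ i + t * g i`, `l`, or `u`,
for a single common scalar `t`. -/
theorem stmt17 (n : ℕ) (g x₀ : EuclideanSpace ℝ (Fin n)) (hg : g ≠ 0)
    (c l u : ℝ) (hlu : l ≤ u)
    (S : Set (EuclideanSpace ℝ (Fin n)))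
    (hS : S = {x | ⟪g, x - x₀⟫ = -c ∧ ∀ i, x i ∈ Set.Icc l u})
    (xs : EuclideanSpace ℝ (Fin n))
    (hxs : xs ∈ S)
    (hmin : IsMinOn (fun x => ‖x - x₀‖) S xs) :
    ∃ t : ℝ, ∀ i, xs i = x₀ i + t * g i ∨ xs i = l ∨ xs i = u := by
  subst hS
  obtain ⟨hxsc, hxsb⟩ := hxs
  have hmin' : ∀ y : EuclideanSpace ℝ (Fin n), ⟪g, y - x₀⟫ = -c →
      (∀ i, y i ∈ Set.Icc l u) → ‖xs - x₀‖ ≤ ‖y - x₀‖ := by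
    intro y h1 h2
    exact hmin ⟨h1, h2⟩
  have key := fun (d : EuclideanSpace ℝ (Fin n)) (hd : ⟪g, d⟫ = 0)
    (hsupp : ∀ i, d i ≠ 0 → l < xs i ∧ xs i < u) =>
    stmt17_key hmin' hxsc hd hsupp hxsb
  -- free coordinates with g i = 0 satisfy xs i = x₀ i
  have hfree0 : ∀ i : Fin n, l < xs i → xs i < u → g i = 0 → xs i = x₀ i := by
    intro i h1 h2 hgi
    have hd : ⟪g, (EuclideanSpace.single i (1:ℝ) : EuclideanSpace ℝ (Fin n))⟫ = 0 := by
      rw [EuclideanSpace.inner_single_right]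
      simp [hgi]
    have hsupp : ∀ j, (EuclideanSpace.single i (1:ℝ) : EuclideanSpace ℝ (Fin n)) j ≠ 0 →
        l < xs j ∧ xs j < u := by
      intro j hj
      rw [EuclideanSpace.single_apply] at hj
      by_cases h : j = i
      · subst h; exact ⟨h1, h2⟩
      · simp [h] at hj
    have := key _ hd hsupp
    rw [EuclideanSpace.inner_single_right] at this
    simp at this
    have : (xs - x₀) i = 0 := this
    have : xs i - x₀ i = 0 := this
    linarith
  by_cases hex : ∃ i₀ : Fin n, (l < xs i₀ ∧ xs i₀ < u) ∧ g i₀ ≠ 0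
  · obtain ⟨i₀, ⟨h1₀, h2₀⟩, hg₀⟩ := hex
    refine ⟨(xs i₀ - x₀ i₀) / g i₀, fun i => ?_⟩
    rcases lt_or_eq_of_le (hxsb i).1 with h1 | h1
    · rcases lt_or_eq_of_le (hxsb i).2 with h2 | h2
      · -- free coordinate
        left
        by_cases hgi : g i = 0
        · rw [hfree0 i h1 h2 hgi, hgi]; ring
        · by_cases hii : i = i₀
          · subst hii
            field_simp
            ring
          · set d : EuclideanSpace ℝ (Fin n) :=
              EuclideanSpace.single i (g i₀) - EuclideanSpace.single i₀ (g i) with hdd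
            have hd : ⟪g, d⟫ = 0 := by
              rw [hdd, inner_sub_right, EuclideanSpace.inner_single_right,
                EuclideanSpace.inner_single_right]
              simp
              ring
            have hsupp : ∀ j, d j ≠ 0 → l < xs j ∧ xs j < u := by
              intro j hj
              have : d j = (if j = i then g i₀ else 0) - (if j = i₀ then g i else 0) := by
                rw [hdd]
                simp [EuclideanSpace.single_apply]
              rw [this] at hj
              by_cases hji : j = i
              · subst hji; exact ⟨h1, h2⟩
              · by_cases hji0 : j = i₀
                · subst hji0; exact ⟨h1₀, h2₀⟩
                · simp [hji, hji0] at hj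
            have hk := key d hd hsupp
            rw [hdd, inner_sub_right, EuclideanSpace.inner_single_right,
              EuclideanSpace.inner_single_right] at hk
            simp at hk
            field_simp
            nlinarith [hk]
      · right; right; exact h2
    · right; left; exact h1.symm
  · push_neg at hex
    refine ⟨0, fun i => ?_⟩
    rcases lt_or_eq_of_le (hxsb i).1 with h1 | h1
    · rcases lt_or_eq_of_le (hxsb i).2 with h2 | h2
      · left
        rw [hfree0 i h1 h2 (hex i ⟨h1, h2⟩)]
        ring
      · right; right; exact h2
    · right; left; exact h1.symm
end
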